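/- arXiv:2401.00614 — 3 statements merged into one kernel-verified Lean document; each statement's English description precedes it below -/
import Mathlib

section
/- There exists a set S ⊆ ℝ such that: (1) for every m ∈ ℕ with m ≥ 1 and every k ∈ ℤ, m^k · S = S and m^k + S = S; (2) S, −S, and some subset Q of ℚ partition ℝ (S ∩ (−S) = ∅, S ∩ Q = ∅, (−S) ∩ Q = ∅, and S ∪ (−S) ∪ Q = ℝ); (3) there is an irrational ξ with S + ξ ⊆ S. -/
/-! Split `ℝ` as a `ℚ`-vector space into `ℚ ⊕ C` and let `f : ℝ → ℝ` be the projection onto `C`,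
a `ℚ`-linear map whose kernel is exactly `ℚ`. Then `S = {x | 0 < f x}` works: `f` kills rational
translations and commutes with rational scalings, the sign of `f` splits `ℝ` into `S`, `-S` and
`ℚ`, and `S + ξ ⊆ S` for any `ξ` with `0 < f ξ`, which is irrational because `f ξ ≠ 0`. -/

theorem exists_linearMap_apply_eq_zero_iff_mem_range_ratCast :
    ∃ f : ℝ →ₗ[ℚ] ℝ, ∀ x, f x = 0 ↔ x ∈ Set.range ((↑) : ℚ → ℝ) := by
  obtain ⟨C, hC⟩ := (ℚ ∙ (1 : ℝ)).exists_isCompl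
  refine ⟨C.subtype ∘ₗ C.projectionOnto _ hC.symm, fun x => ?_⟩
  simp only [LinearMap.comp_apply, Submodule.subtype_apply, ZeroMemClass.coe_eq_zero,
    Submodule.projectionOnto_apply_eq_zero_iff, Submodule.mem_span_singleton, Rat.smul_one_eq_cast,
    Set.mem_range]

section PositiveSet

variable (f : ℝ →ₗ[ℚ] ℝ)

lemma map_ratCast_mul (q : ℚ) (x : ℝ) : f (q * x) = q * f x := by
  rw [← Rat.smul_def, map_smul, Rat.smul_def]

lemma image_ratCast_mul_setOf_pos {q : ℚ} (hq : 0 < q) :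
    (fun x => (q : ℝ) * x) '' {x | 0 < f x} = {x | 0 < f x} := by
  have hpos : ∀ r : ℚ, 0 < r → ∀ x, 0 < f x → 0 < f (r * x) := fun r hr x hx => by
    rw [map_ratCast_mul]
    exact mul_pos (Rat.cast_pos.2 hr) hx
  refine Set.Subset.antisymm (Set.image_subset_iff.2 fun x => hpos q hq x) fun y hy => ?_
  refine ⟨(q⁻¹ : ℚ) * y, hpos _ (inv_pos.2 hq) y hy, ?_⟩
  have : (q : ℝ) ≠ 0 := Rat.cast_ne_zero.2 hq.ne'
  push_cast
  field_simp

lemma image_ratCast_add_setOf_pos (hf : ∀ q : ℚ, f q = 0) (q : ℚ) :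
    (fun x => (q : ℝ) + x) '' {x | 0 < f x} = {x | 0 < f x} := by
  have hadd : ∀ (r : ℚ) x, f (r + x) = f x := fun r x => by rw [map_add, hf, zero_add]
  refine Set.Subset.antisymm (Set.image_subset_iff.2 fun x hx => ?_) fun y hy => ?_
  · simpa [hadd] using hx
  · refine ⟨(-q : ℚ) + y, by rwa [Set.mem_ofPred_eq, hadd], ?_⟩
    push_cast
    ring

lemma image_add_setOf_pos_subset {ξ : ℝ} (hξ : 0 ≤ f ξ) :
    (fun x => x + ξ) '' {x | 0 < f x} ⊆ {x | 0 < f x} := by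
  rintro _ ⟨x, hx, rfl⟩
  simp only [Set.mem_ofPred_eq, map_add] at hx ⊢
  linarith

lemma neg_setOf_pos : -{x | 0 < f x} = {x | f x < 0} := by
  ext x
  simp

lemma setOf_pos_neg_zero_partition :
    let S := {x | 0 < f x}; let Z := {x | f x = 0}
    S ∩ -S = ∅ ∧ S ∩ Z = ∅ ∧ -S ∩ Z = ∅ ∧ S ∪ -S ∪ Z = Set.univ := by
  simp only [neg_setOf_pos, Set.eq_empty_iff_forall_notMem, Set.eq_univ_iff_forall,
    Set.mem_inter_iff, Set.mem_union, Set.mem_ofPred_eq]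
  exact ⟨fun x => by grind, fun x => by grind, fun x => by grind, fun x => by grind⟩

lemma exists_apply_pos {x : ℝ} (hx : f x ≠ 0) : ∃ ξ, 0 < f ξ := by
  rcases hx.lt_or_gt with h | h
  · exact ⟨-x, by simpa using h⟩
  · exact ⟨x, h⟩

end PositiveSet

/-- Existence of a set S ⊆ ℝ with: m^k·S = m^k + S = S for all m ≥ 1, k ∈ ℤ;
S ⊔ (−S) ⊔ Q = ℝ for some Q ⊆ ℚ; and S + ξ ⊆ S for some irrational ξ. -/
theorem stmt_5 :
    ∃ S : Set ℝ,
      (∀ m : ℕ, 1 ≤ m → ∀ k : ℤ,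
        (fun x => (m : ℝ) ^ k * x) '' S = S ∧ (fun x => (m : ℝ) ^ k + x) '' S = S) ∧
      (∃ Q : Set ℝ, Q ⊆ Set.range ((↑) : ℚ → ℝ) ∧
        S ∩ (-S) = ∅ ∧ S ∩ Q = ∅ ∧ (-S) ∩ Q = ∅ ∧ S ∪ (-S) ∪ Q = Set.univ) ∧
      (∃ ξ : ℝ, Irrational ξ ∧ (fun x => x + ξ) '' S ⊆ S) := by
  obtain ⟨f, hf⟩ := exists_linearMap_apply_eq_zero_iff_mem_range_ratCast
  have hf_rat (q : ℚ) : f q = 0 := (hf q).2 ⟨q, rfl⟩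
  obtain ⟨ξ, hξ⟩ := exists_apply_pos f (mt (hf _).1 irrational_sqrt_two)
  refine ⟨{x | 0 < f x}, fun m hm k => ?_,
    ⟨{x | f x = 0}, fun x => (hf x).1, setOf_pos_neg_zero_partition f⟩,
    ⟨ξ, fun h => hξ.ne' ((hf ξ).2 h), image_add_setOf_pos_subset f hξ.le⟩⟩
  have hcast : (((m : ℚ) ^ k : ℚ) : ℝ) = (m : ℝ) ^ k := by push_cast; rfl
  rw [← hcast]
  exact ⟨image_ratCast_mul_setOf_pos f (zpow_pos (by exact_mod_cast hm) k),
    image_ratCast_add_setOf_pos f hf_rat _⟩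
end

section
/- Let S ⊆ ℕ be an infinite set of natural density zero, and let x ∈ ℝ with d⁻(x, 0) = c (respectively d⁺(x,0) = c), where d⁻, d⁺ denote lower/upper frequency of the digit 0 in the binary expansion of x. Then d⁻(x + Σ_{j∈S} 2^{−j}, 0) ≥ c (respectively d⁺(x + Σ_{j∈S} 2^{−j}, 0) ≥ c). -/
open Filter

/-- The i-th fractional binary digit of `x` in the lexicographically minimal
binary expansion (for dyadic rationals, the expansion ending in ones). -/
noncomputable def minBinDigit (x : ℝ) (i : ℕ) : ℤ :=
  ⌈x * 2 ^ i⌉ - 2 * ⌈x * 2 ^ (i - 1)⌉ + 1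

/-- Number of indices 1 ≤ i ≤ k whose binary digit of `x` equals `j`. -/
noncomputable def digitCount (x : ℝ) (j : ℤ) (k : ℕ) : ℕ :=
  ((Finset.Icc 1 k).filter fun i => minBinDigit x i = j).card

/-- Upper frequency of digit `j` in the binary expansion of `x`. -/
noncomputable def dPlus (x : ℝ) (j : ℤ) : ℝ :=
  limsup (fun k : ℕ => (digitCount x j k : ℝ) / k) atTop

/-- Lower frequency of digit `j` in the binary expansion of `x`. -/
noncomputable def dMinus (x : ℝ) (j : ℤ) : ℝ :=
  liminf (fun k : ℕ => (digitCount x j k : ℝ) / k) atTop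

/-!
Put `y = ∑_{j ∈ S} 2^(-j)`. For any two reals the minimal binary digits obey the schoolbook rule
`d(x + y)ᵢ + 2 cᵢ₋₁ = d(x)ᵢ + d(y)ᵢ + cᵢ` with carries `cᵢ ∈ {0, 1}`, and since `S` is infinite the
digits of `y` are exactly the indicator of `S`. A case check on this rule shows that
`#{i ≤ k | d(x)ᵢ = 0} - cₖ` grows no faster than `#{i ≤ k | d(x + y)ᵢ = 0} + 2 #(S ∩ [1, k])`,
so the two zero counts differ by at most `2 #(S ∩ [1, k]) + 1 = o(k)`, which is invisible to
`liminf` and `limsup` of the frequencies.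
-/

open Finset Topology

lemma minBinDigit_succ (x : ℝ) (i : ℕ) :
    minBinDigit x (i + 1) = ⌈x * 2 ^ (i + 1)⌉ - 2 * ⌈x * 2 ^ i⌉ + 1 := rfl

lemma minBinDigit_succ_eq_zero_or_one (x : ℝ) (i : ℕ) :
    minBinDigit x (i + 1) = 0 ∨ minBinDigit x (i + 1) = 1 := by
  have h : x * 2 ^ (i + 1) = x * 2 ^ i + x * 2 ^ i := by ring
  have := Int.ceil_add_le (x * 2 ^ i) (x * 2 ^ i)
  have := Int.ceil_add_ceil_le (x * 2 ^ i) (x * 2 ^ i)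
  rw [minBinDigit_succ, h]
  omega

/-- The carry, `0` or `1`, that the places after the `i`-th pass on to it when the minimal binary
expansions of `x` and `z` are added. -/
noncomputable def binCarry (x z : ℝ) (i : ℕ) : ℤ :=
  ⌈(x + z) * 2 ^ i⌉ - ⌈x * 2 ^ i⌉ - ⌈z * 2 ^ i⌉ + 1

lemma binCarry_eq_zero_or_one (x z : ℝ) (i : ℕ) :
    binCarry x z i = 0 ∨ binCarry x z i = 1 := by
  have := Int.ceil_add_le (x * 2 ^ i) (z * 2 ^ i)
  have := Int.ceil_add_ceil_le (x * 2 ^ i) (z * 2 ^ i)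
  rw [binCarry, add_mul]
  omega

lemma minBinDigit_add_succ (x z : ℝ) (i : ℕ) :
    minBinDigit (x + z) (i + 1) + 2 * binCarry x z i
      = minBinDigit x (i + 1) + minBinDigit z (i + 1) + binCarry x z (i + 1) := by
  simp only [minBinDigit_succ, binCarry]
  ring

lemma digitCount_succ (x : ℝ) (j : ℤ) (k : ℕ) :
    digitCount x j (k + 1) = digitCount x j k + if minBinDigit x (k + 1) = j then 1 else 0 := by
  simp only [digitCount, card_filter, sum_Icc_succ_top (by omega : 1 ≤ k + 1)]

lemma digitCount_zero_add_binCarry_le (x z : ℝ) (k : ℕ) :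
    (digitCount x 0 k : ℤ) + binCarry x z 0
      ≤ digitCount (x + z) 0 k + 2 * digitCount z 1 k + binCarry x z k := by
  induction k with
  | zero => simp [digitCount]
  | succ k ih =>
    have hadd := minBinDigit_add_succ x z k
    have hx := minBinDigit_succ_eq_zero_or_one x k
    have hz := minBinDigit_succ_eq_zero_or_one z k
    have hxz := minBinDigit_succ_eq_zero_or_one (x + z) k
    have hc := binCarry_eq_zero_or_one x z k
    have hc' := binCarry_eq_zero_or_one x z (k + 1)
    simp only [digitCount_succ]
    push_cast
    split_ifs <;> omega

lemma digitCount_zero_le_add (x z : ℝ) (k : ℕ) :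
    digitCount x 0 k ≤ digitCount (x + z) 0 k + 2 * digitCount z 1 k + 1 := by
  have h := digitCount_zero_add_binCarry_le x z k
  have := binCarry_eq_zero_or_one x z 0
  have := binCarry_eq_zero_or_one x z k
  omega

def binaryPrefix (S : Set ℕ) [DecidablePred (· ∈ S)] (i : ℕ) : ℕ :=
  ∑ j ∈ (range (i + 1)).filter (· ∈ S), 2 ^ (i - j)

section TsumTwoZpowNeg

variable {S : Set ℕ} [DecidablePred (· ∈ S)]

lemma binaryPrefix_succ (i : ℕ) :
    binaryPrefix S (i + 1) = 2 * binaryPrefix S i + if i + 1 ∈ S then 1 else 0 := by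
  have hshift : ∀ j ∈ range (i + 1), 2 ^ (i + 1 - j) = 2 * 2 ^ (i - j) := fun j hj => by
    rw [← pow_succ', Nat.sub_add_comm (Nat.lt_succ_iff.mp (mem_range.mp hj))]
  simp only [binaryPrefix, sum_filter, sum_range_succ _ (i + 1), Nat.sub_self, pow_zero, mul_sum]
  congr 1
  exact sum_congr rfl fun j hj => by split_ifs <;> simp [hshift j hj]

/-- The tail `∑_{j ∈ S, j > i} 2^(i-j)` lies in `(0, 1]` since `S` is infinite. -/
lemma ceil_tsum_two_zpow_neg_mul_two_pow (hS : S.Infinite) (i : ℕ) :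
    ⌈(∑' j : S, (2 : ℝ) ^ (-(j : ℤ))) * 2 ^ i⌉ = binaryPrefix S i + 1 := by
  set u : ℕ → ℝ := fun j => if j ∈ S then 2 ^ i / 2 ^ j else 0
  have hu_nonneg : ∀ j, 0 ≤ u j := fun j => by dsimp [u]; split_ifs <;> positivity
  have hu : Summable u := by
    refine Summable.of_nonneg_of_le hu_nonneg (fun j => ?_)
      (summable_geometric_two.mul_left (2 ^ i))
    dsimp [u]; split_ifs
    · rw [one_div_pow, mul_one_div]
    · positivity
  have hy : (∑' j : S, (2 : ℝ) ^ (-(j : ℤ))) * 2 ^ i = ∑' j, u j := by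
    rw [_root_.tsum_subtype S fun j : ℕ => (2 : ℝ) ^ (-(j : ℤ)), ← tsum_mul_right]
    refine tsum_congr fun j => ?_
    simp only [Set.indicator_apply, u, zpow_neg, zpow_natCast]
    split_ifs <;> simp_all [div_eq_inv_mul]
  have hhead : ∑ j ∈ range (i + 1), u j = binaryPrefix S i := by
    simp only [binaryPrefix, sum_filter, Nat.cast_sum, Nat.cast_ite, Nat.cast_pow, Nat.cast_ofNat,
      Nat.cast_zero, u]
    refine sum_congr rfl fun j hj => ?_
    rw [pow_sub₀ _ two_ne_zero (Nat.lt_succ_iff.mp (mem_range.mp hj)), div_eq_mul_inv]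
  have htail_le : ∀ m, u (m + (i + 1)) ≤ 1 / 2 / 2 ^ m := fun m => by
    dsimp [u]; split_ifs
    · rw [pow_add, pow_succ]; field_simp; rfl
    · positivity
  have htail : Summable fun m => u (m + (i + 1)) := (summable_nat_add_iff (i + 1)).mpr hu
  have htail_pos : 0 < ∑' m, u (m + (i + 1)) := by
    obtain ⟨j, hjS, hij⟩ := hS.exists_gt i
    refine htail.tsum_pos (fun m => hu_nonneg _) (j - (i + 1)) ?_
    simp only [u, Nat.sub_add_cancel hij, if_pos hjS]
    positivity
  have htail_le_one : ∑' m, u (m + (i + 1)) ≤ 1 :=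
    (htail.tsum_le_tsum htail_le (summable_geometric_two' 1)).trans (tsum_geometric_two' 1).le
  rw [Int.ceil_eq_iff, hy, ← hu.sum_add_tsum_nat_add (i + 1), hhead]
  push_cast
  constructor <;> linarith

lemma minBinDigit_tsum_two_zpow_neg (hS : S.Infinite) (i : ℕ) :
    minBinDigit (∑' j : S, (2 : ℝ) ^ (-(j : ℤ))) (i + 1) = if i + 1 ∈ S then 1 else 0 := by
  rw [minBinDigit_succ, ceil_tsum_two_zpow_neg_mul_two_pow hS,
    ceil_tsum_two_zpow_neg_mul_two_pow hS, binaryPrefix_succ]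
  push_cast
  ring

lemma digitCount_tsum_two_zpow_neg_one (hS : S.Infinite) (k : ℕ) :
    digitCount (∑' j : S, (2 : ℝ) ^ (-(j : ℤ))) 1 k = ((Icc 1 k).filter (· ∈ S)).card := by
  refine congrArg card (filter_congr fun i hi => ?_)
  obtain ⟨m, rfl⟩ : ∃ m, i = m + 1 := ⟨i - 1, by grind⟩
  rw [minBinDigit_tsum_two_zpow_neg hS]
  split_ifs <;> simp_all

end TsumTwoZpowNeg

section LimitComparison

variable {ι : Type*} {l : Filter ι} [l.NeBot] {f g e : ι → ℝ}

lemma liminf_le_liminf_of_le_add_of_tendsto_zero (hfg : ∀ᶠ k in l, g k ≤ f k + e k)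
    (he : Tendsto e l (𝓝 0)) (hf : IsBoundedUnder (· ≤ ·) l f) (hf' : IsBoundedUnder (· ≥ ·) l f)
    (hg : IsBoundedUnder (· ≥ ·) l g) : liminf g l ≤ liminf f l :=
  calc liminf g l ≤ liminf (e + f) l :=
        liminf_le_liminf (hfg.mono fun k hk => by simpa [add_comm] using hk) hg
          (isBoundedUnder_le_add he.isBoundedUnder_le hf).isCoboundedUnder_ge
    _ ≤ limsup e l + liminf f l :=
        liminf_add_le he.isBoundedUnder_ge he.isBoundedUnder_le hf' hf.isCoboundedUnder_ge
    _ = liminf f l := by rw [he.limsup_eq, zero_add]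

lemma limsup_le_limsup_of_le_add_of_tendsto_zero (hfg : ∀ᶠ k in l, g k ≤ f k + e k)
    (he : Tendsto e l (𝓝 0)) (hf : IsBoundedUnder (· ≤ ·) l f) (hf' : IsBoundedUnder (· ≥ ·) l f)
    (hg : IsBoundedUnder (· ≥ ·) l g) : limsup g l ≤ limsup f l :=
  calc limsup g l ≤ limsup (e + f) l :=
        limsup_le_limsup (hfg.mono fun k hk => by simpa [add_comm] using hk) hg.isCoboundedUnder_le
          (isBoundedUnder_le_add he.isBoundedUnder_le hf)
    _ ≤ limsup e l + limsup f l :=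
        limsup_add_le he.isBoundedUnder_ge he.isBoundedUnder_le hf'.isCoboundedUnder_le hf
    _ = limsup f l := by rw [he.limsup_eq, zero_add]

end LimitComparison

lemma digitCount_le (x : ℝ) (j : ℤ) (k : ℕ) : digitCount x j k ≤ k :=
  (card_filter_le _ _).trans (by simp)

lemma isBoundedUnder_le_digitCount_div (x : ℝ) (j : ℤ) :
    IsBoundedUnder (· ≤ ·) atTop fun k : ℕ => (digitCount x j k : ℝ) / k :=
  isBoundedUnder_of ⟨1, fun k =>
    div_le_one_of_le₀ (by exact_mod_cast digitCount_le x j k) k.cast_nonneg⟩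

lemma isBoundedUnder_ge_digitCount_div (x : ℝ) (j : ℤ) :
    IsBoundedUnder (· ≥ ·) atTop fun k : ℕ => (digitCount x j k : ℝ) / k :=
  isBoundedUnder_of ⟨0, fun k => by positivity⟩

/-- Adding \sum_{j ∈ S} 2^{-j} for an infinite density-zero set S does not decrease
the lower (resp. upper) frequency of the digit 0. -/
theorem stmt_9 (S : Set ℕ) [DecidablePred (· ∈ S)] (hS : S.Infinite)
    (hdens : Tendsto
      (fun k : ℕ => ((((Finset.Icc 1 k).filter fun i => i ∈ S).card : ℝ) / k))
      atTop (nhds 0))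
    (x c : ℝ) :
    (dMinus x 0 = c → c ≤ dMinus (x + ∑' j : S, (2 : ℝ) ^ (-(j : ℤ))) 0) ∧
    (dPlus x 0 = c → c ≤ dPlus (x + ∑' j : S, (2 : ℝ) ^ (-(j : ℤ))) 0) := by
  set y := ∑' j : S, (2 : ℝ) ^ (-(j : ℤ))
  set e : ℕ → ℝ := fun k => 2 * ((((Icc 1 k).filter fun i => i ∈ S).card : ℝ) / k) + 1 / k
  have hle : ∀ k : ℕ, (digitCount x 0 k : ℝ) / k ≤ (digitCount (x + y) 0 k : ℝ) / k + e k := by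
    intro k
    have h := digitCount_zero_le_add x y k
    rw [digitCount_tsum_two_zpow_neg_one hS] at h
    calc (digitCount x 0 k : ℝ) / k
        ≤ (digitCount (x + y) 0 k + 2 * ((Icc 1 k).filter (· ∈ S)).card + 1 : ℝ) / k := by
          gcongr; exact_mod_cast h
      _ = _ := by simp only [e]; ring
  have he : Tendsto e atTop (𝓝 0) := by
    simpa [e] using (hdens.const_mul 2).add tendsto_one_div_atTop_nhds_zero_nat
  have hf := isBoundedUnder_le_digitCount_div (x + y) 0
  have hf' := isBoundedUnder_ge_digitCount_div (x + y) 0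
  have hg := isBoundedUnder_ge_digitCount_div x 0
  refine ⟨fun hc => hc ▸ ?_, fun hc => hc ▸ ?_⟩
  · exact liminf_le_liminf_of_le_add_of_tendsto_zero (.of_forall hle) he hf hf' hg
  · exact limsup_le_limsup_of_le_add_of_tendsto_zero (.of_forall hle) he hf hf' hg
end

section
/- Let Q ⊆ ℕ be a set of binary digit positions and S ⊆ Q an infinite subset of density zero, and let R ⊆ ℕ be defined by Σ_{j∈Q} 2^{−j} + Σ_{j∈S} 2^{−j} = Σ_{j∈R} 2^{−j} (binary addition with carries). Then: (a) if i ∉ Q and i+1 ∉ Q, then i ∉ R; (b) if a ∉ Q, a+b ∉ Q, and i ∈ Q for all a < i < a+b, then #{a ≤ i < a+b : i ∈ R} ≤ b−1 = #{a ≤ i < a+b : i ∈ Q}. -/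
open Filter

namespace Stmt10Aux

open Finset

noncomputable def f (n : ℕ) : ℝ := (2:ℝ)^(-(n:ℤ))

lemma f_eq (n : ℕ) : f n = (2⁻¹:ℝ)^n := by
  simp [f, zpow_neg, ← inv_zpow, zpow_natCast]

lemma f_pos (n : ℕ) : 0 < f n := by rw [f_eq]; positivity

lemma f_succ (n : ℕ) : f (n+1) = 2⁻¹ * f n := by
  rw [f_eq, f_eq, pow_succ]; ring

lemma summable_f : Summable f := by
  have : f = fun n => (2⁻¹:ℝ)^n := funext f_eq
  rw [this]
  exact summable_geometric_of_lt_one (by norm_num) (by norm_num)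

noncomputable def g (T : Set ℕ) (n : ℕ) : ℝ := T.indicator f n

lemma g_nonneg (T : Set ℕ) (n : ℕ) : 0 ≤ g T n :=
  Set.indicator_nonneg (fun i _ => (f_pos i).le) n

lemma g_le (T : Set ℕ) (n : ℕ) : g T n ≤ f n :=
  Set.indicator_le_self' (fun i _ => (f_pos i).le) n

lemma summable_g (T : Set ℕ) : Summable (g T) :=
  Summable.of_nonneg_of_le (g_nonneg T) (g_le T) summable_f

lemma summable_g_shift (T : Set ℕ) (n : ℕ) : Summable (fun i => g T (i + n)) :=
  (summable_nat_add_iff n).2 (summable_g T)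

lemma summable_f_shift (n : ℕ) : Summable (fun i => f (i + n)) :=
  (summable_nat_add_iff n).2 summable_f

noncomputable def tail (T : Set ℕ) (n : ℕ) : ℝ := ∑' i, g T (i + n)

noncomputable def F (n : ℕ) : ℝ := ∑' i, f (i + n)

lemma F_eq (n : ℕ) : F n = 2 * f n := by
  have h1 : ∀ i, f (i + n) = (2⁻¹:ℝ)^i * (2⁻¹:ℝ)^n := fun i => by
    rw [f_eq, pow_add]
  calc F n = ∑' i, (2⁻¹:ℝ)^i * (2⁻¹:ℝ)^n := tsum_congr h1
    _ = (∑' i, (2⁻¹:ℝ)^i) * (2⁻¹:ℝ)^n := tsum_mul_right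
    _ = 2 * f n := by
        rw [tsum_geometric_of_lt_one (by norm_num) (by norm_num), f_eq]
        norm_num

lemma head_add_tail (T : Set ℕ) (n : ℕ) :
    (∑ j ∈ range n, g T j) + tail T n = ∑' j, g T j :=
  Summable.sum_add_tsum_nat_add n (summable_g T)

lemma tail_nonneg (T : Set ℕ) (n : ℕ) : 0 ≤ tail T n :=
  tsum_nonneg (fun i => g_nonneg T _)

lemma tail_le (T : Set ℕ) (n : ℕ) : tail T n ≤ F n :=
  Summable.tsum_le_tsum (fun i => g_le T _) (summable_g_shift T n) (summable_f_shift n)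

lemma tail_lt (T : Set ℕ) (n m : ℕ) (hnm : n ≤ m) (hm : m ∉ T) : tail T n < F n := by
  refine Summable.tsum_lt_tsum (i := m - n) (fun i => g_le T _) ?_ (summable_g_shift T n)
    (summable_f_shift n)
  have : m - n + n = m := Nat.sub_add_cancel hnm
  rw [this]
  simpa [g, Set.indicator_of_notMem hm] using f_pos m

lemma tail_pos (T : Set ℕ) (n m : ℕ) (hnm : n ≤ m) (hm : m ∈ T) : 0 < tail T n := by
  refine Summable.tsum_pos (summable_g_shift T n) (fun i => g_nonneg T _) (m - n) ?_
  have : m - n + n = m := Nat.sub_add_cancel hnm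
  rw [this]
  simpa [g, Set.indicator_of_mem hm] using f_pos m

noncomputable def KZ (T : Set ℕ) (n : ℕ) : ℤ :=
  ∑ j ∈ range n, T.indicator (fun j => (2:ℤ)^(n-1-j)) j

noncomputable def ind (T : Set ℕ) (n : ℕ) : ℤ := T.indicator (fun _ => (1:ℤ)) n

lemma ind01 (T : Set ℕ) (n : ℕ) : ind T n = 0 ∨ ind T n = 1 := by
  by_cases h : n ∈ T <;> simp [ind, h]

lemma ind_of_mem {T : Set ℕ} {n : ℕ} (h : n ∈ T) : ind T n = 1 := by simp [ind, h]
lemma ind_of_not_mem {T : Set ℕ} {n : ℕ} (h : n ∉ T) : ind T n = 0 := by simp [ind, h]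

lemma KZ_succ (T : Set ℕ) (n : ℕ) : KZ T (n+1) = 2 * KZ T n + ind T n := by
  unfold KZ
  rw [Finset.sum_range_succ, Finset.mul_sum]
  congr 1
  · apply Finset.sum_congr rfl
    intro j hj
    have hjn : j < n := Finset.mem_range.1 hj
    by_cases h : j ∈ T
    · simp only [Set.indicator_of_mem h]
      rw [show n + 1 - 1 - j = (n - 1 - j) + 1 by omega, pow_succ]
      ring
    · simp [Set.indicator_of_notMem h]
  · by_cases h : n ∈ T <;> simp [Set.indicator_of_mem, Set.indicator_of_notMem, h, ind]

lemma head_eq (T : Set ℕ) (n : ℕ) :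
    (∑ j ∈ range n, g T j) = (KZ T n : ℝ) * (2 * f n) := by
  induction n with
  | zero => simp [KZ]
  | succ n ih =>
    rw [Finset.sum_range_succ, ih, KZ_succ]
    have hf : f n = 2 * f (n+1) := by rw [f_succ]; ring
    have hg : g T n = (ind T n : ℝ) * f n := by
      by_cases h : n ∈ T <;> simp [g, ind, h]
    rw [hg, hf]
    push_cast
    ring

end Stmt10Aux

open Stmt10Aux Finset

/-- Carry values are 0 or 1. -/
lemma carry01 (Q S R : Set ℕ)
    (hSmem : ∀ n, ∃ m, n ≤ m ∧ m ∈ S)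
    (hSmiss : ∀ n, ∃ m, n ≤ m ∧ m ∉ S)
    (hR : (∑' j, g Q j) + (∑' j, g S j) = ∑' j, g R j) (n : ℕ) :
    KZ R n - KZ Q n - KZ S n = 0 ∨ KZ R n - KZ Q n - KZ S n = 1 := by
  have hQ := head_add_tail Q n
  have hS := head_add_tail S n
  have hRr := head_add_tail R n
  rw [head_eq] at hQ hS hRr
  have key : ((KZ R n - KZ Q n - KZ S n : ℤ) : ℝ) * (2 * f n)
      = tail Q n + tail S n - tail R n := by
    push_cast
    nlinarith [hQ, hS, hRr, hR]
  obtain ⟨m1, hm1, hm1S⟩ := hSmem n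
  obtain ⟨m2, hm2, hm2S⟩ := hSmiss n
  have hpos : (0:ℝ) < 2 * f n := by have := f_pos n; linarith
  have hub : tail Q n + tail S n - tail R n < 2 * (2 * f n) := by
    have h1 : tail Q n ≤ F n := tail_le Q n
    have h2 : tail S n < F n := tail_lt S n m2 hm2 hm2S
    have h3 : 0 ≤ tail R n := tail_nonneg R n
    have h4 : F n = 2 * f n := F_eq n
    linarith
  have hlb : -(2 * f n) < tail Q n + tail S n - tail R n := by
    have h1 : 0 ≤ tail Q n := tail_nonneg Q n
    have h2 : 0 < tail S n := tail_pos S n m1 hm1 hm1S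
    have h3 : tail R n ≤ F n := tail_le R n
    have h4 : F n = 2 * f n := F_eq n
    linarith
  have hub' : ((KZ R n - KZ Q n - KZ S n : ℤ) : ℝ) < 2 := by
    by_contra h
    push_neg at h
    nlinarith [key, hub, hpos]
  have hlb' : (-1 : ℝ) < ((KZ R n - KZ Q n - KZ S n : ℤ) : ℝ) := by
    by_contra h
    push_neg at h
    nlinarith [key, hlb, hpos]
  have : (-1 : ℤ) < KZ R n - KZ Q n - KZ S n := by exact_mod_cast hlb'
  have : KZ R n - KZ Q n - KZ S n < 2 := by exact_mod_cast hub'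
  omega

/-- The combinatorial carry argument. -/
lemma main_comb (q s r c : ℕ → ℤ)
    (hq : ∀ n, q n = 0 ∨ q n = 1) (hs : ∀ n, s n = 0 ∨ s n = 1)
    (hr : ∀ n, r n = 0 ∨ r n = 1) (hc : ∀ n, c n = 0 ∨ c n = 1)
    (hsq : ∀ n, s n ≤ q n)
    (hdig : ∀ n, r n = q n + s n + c (n+1) - 2 * c n)
    (a b : ℕ) (hb : 1 ≤ b) (ha : q a = 0) (hab : q (a+b) = 0) :
    ∃ j, a ≤ j ∧ j < a + b ∧ r j = 0 := by
  have hcab : c (a+b) = 0 := by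
    have h1 := hdig (a+b)
    have h2 := hr (a+b)
    have h3 := hc (a+b)
    have h4 := hc (a+b+1)
    have h5 := hsq (a+b)
    have h6 := hs (a+b)
    omega
  have aux : ∀ d, d < b → (∃ j, a ≤ j ∧ j < a + b ∧ r j = 0) ∨ c (a + b - d) = 0 := by
    intro d
    induction d with
    | zero => intro _; right; simpa using hcab
    | succ d ih =>
      intro hdb
      rcases ih (by omega) with h | h
      · exact Or.inl h
      · set j := a + b - d - 1 with hj
        have hj1 : a + b - d = j + 1 := by omega
        have hja : a ≤ j := by omega
        have hjab : j < a + b := by omega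
        have hd := hdig j
        rw [← hj1] at hd
        rcases hr j with h0 | h1
        · exact Or.inl ⟨j, hja, hjab, h0⟩
        · right
          have h2 := hq j
          have h3 := hs j
          have h4 := hc j
          have : a + b - (d+1) = j := by omega
          rw [this]
          omega
  rcases aux (b-1) (by omega) with h | h
  · exact h
  · have h1 : a + b - (b-1) = a + 1 := by omega
    rw [h1] at h
    refine ⟨a, le_refl a, by omega, ?_⟩
    have hd := hdig a
    have h2 := hs a
    have h3 := hsq a
    have h4 := hc a
    have h5 := hr a
    omega

/-- The two combinatorial carry facts: if R encodes the binary digits of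
(∑_{j∈Q} 2^{-j}) + (∑_{j∈S} 2^{-j}) with S ⊆ Q infinite of density zero, then
(a) i ∉ Q and i+1 ∉ Q imply i ∉ R; (b) on a maximal block of ones of Q between
positions a and a+b, R has at most b−1 ones. -/
theorem stmt_10 (Q S R : Set ℕ) [DecidablePred (· ∈ Q)] [DecidablePred (· ∈ S)] [DecidablePred (· ∈ R)]
    (hSQ : S ⊆ Q) (hSinf : S.Infinite)
    (hdens : Tendsto
      (fun k : ℕ => ((((Finset.Icc 1 k).filter fun i => i ∈ S).card : ℝ) / k))
      atTop (nhds 0))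
    (hR : (∑' j : Q, (2 : ℝ) ^ (-(j : ℤ))) + (∑' j : S, (2 : ℝ) ^ (-(j : ℤ)))
        = ∑' j : R, (2 : ℝ) ^ (-(j : ℤ))) :
    (∀ i : ℕ, i ∉ Q → i + 1 ∉ Q → i ∉ R) ∧
    (∀ a b : ℕ, a ∉ Q → a + b ∉ Q → (∀ i, a < i → i < a + b → i ∈ Q) →
      ((Finset.Ico a (a + b)).filter fun i => i ∈ R).card ≤ b - 1 ∧
      b - 1 = ((Finset.Ico a (a + b)).filter fun i => i ∈ Q).card) := by
  -- rewrite the tsums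
  have hconv : ∀ (T : Set ℕ), (∑' j : T, (2 : ℝ) ^ (-(j : ℤ))) = ∑' n, g T n := by
    intro T
    rw [show (fun j : T => (2:ℝ) ^ (-(j:ℤ))) = fun j : T => f (j : ℕ) from rfl]
    exact tsum_subtype T f
  rw [hconv Q, hconv S, hconv R] at hR
  -- S has arbitrarily large members
  have hSmem : ∀ n, ∃ m, n ≤ m ∧ m ∈ S := by
    intro n
    obtain ⟨m, hmS, hm⟩ := hSinf.exists_gt n
    exact ⟨m, hm.le, hmS⟩
  -- S misses arbitrarily large numbers (from density zero)
  have hSmiss : ∀ n, ∃ m, n ≤ m ∧ m ∉ S := by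
    intro n
    by_contra h
    push_neg at h
    -- ∀ m ≥ n, m ∈ S
    set N := n + 1 with hN
    have hsub : ∀ k : ℕ, N ≤ k →
        (k - n : ℕ) ≤ ((Finset.Icc 1 k).filter fun i => i ∈ S).card := by
      intro k hk
      have h1 : Finset.Icc N k ⊆ (Finset.Icc 1 k).filter fun i => i ∈ S := by
        intro i hi
        rw [Finset.mem_Icc] at hi
        rw [Finset.mem_filter, Finset.mem_Icc]
        exact ⟨⟨by omega, hi.2⟩, h i (by omega)⟩
      have h2 := Finset.card_le_card h1
      rwa [Nat.card_Icc, show k + 1 - N = k - n by omega] at h2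
    have hlim1 : Tendsto (fun k : ℕ => 1 - (n:ℝ)/k) atTop (nhds 1) := by
      have := tendsto_const_div_atTop_nhds_zero_nat (n:ℝ)
      have h1 : Tendsto (fun k : ℕ => 1 - (n:ℝ)/k) atTop (nhds (1 - 0)) :=
        tendsto_const_nhds.sub this
      simpa using h1
    have hle : ∀ᶠ k : ℕ in atTop,
        1 - (n:ℝ)/k ≤ (((Finset.Icc 1 k).filter fun i => i ∈ S).card : ℝ) / k := by
      filter_upwards [eventually_ge_atTop N] with k hk
      have hk0 : (0:ℝ) < k := by
        have h1 : 1 ≤ k := by omega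
        exact_mod_cast Nat.lt_of_lt_of_le Nat.zero_lt_one h1
      have h2 := hsub k hk
      have hnk : n ≤ k := by omega
      have h4 : ((k:ℝ) - n) ≤ (((Finset.Icc 1 k).filter fun i => i ∈ S).card : ℝ) := by
        have h3 : ((k - n : ℕ) : ℝ) = (k:ℝ) - n := by push_cast [hnk]; ring
        rw [← h3]; exact_mod_cast h2
      have h5 : (k:ℝ)/k = 1 := div_self (ne_of_gt hk0)
      calc 1 - (n:ℝ)/k = ((k:ℝ) - n)/k := by rw [sub_div, h5]
        _ ≤ _ := by gcongr
    have : (1:ℝ) ≤ 0 := le_of_tendsto_of_tendsto hlim1 hdens hle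
    linarith
  -- carries
  set c : ℕ → ℤ := fun n => KZ R n - KZ Q n - KZ S n with hcdef
  have hc : ∀ n, c n = 0 ∨ c n = 1 := carry01 Q S R hSmem hSmiss hR
  have hdig : ∀ n, ind R n = ind Q n + ind S n + c (n+1) - 2 * c n := by
    intro n
    have h1 := KZ_succ Q n
    have h2 := KZ_succ S n
    have h3 := KZ_succ R n
    simp only [hcdef]
    omega
  have hsq : ∀ n, ind S n ≤ ind Q n := by
    intro n
    by_cases h : n ∈ S
    · rw [ind_of_mem h, ind_of_mem (hSQ h)]
    · rw [ind_of_not_mem h]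
      rcases ind01 Q n with h' | h' <;> omega
  -- the key existence fact
  have key : ∀ a b : ℕ, 1 ≤ b → a ∉ Q → a + b ∉ Q →
      ∃ j, a ≤ j ∧ j < a + b ∧ j ∉ R := by
    intro a b hb ha hab
    obtain ⟨j, hj1, hj2, hj3⟩ := main_comb (ind Q) (ind S) (ind R) c
      (ind01 Q) (ind01 S) (ind01 R) hc hsq hdig a b hb
      (ind_of_not_mem ha) (ind_of_not_mem hab)
    refine ⟨j, hj1, hj2, fun hjR => ?_⟩
    rw [ind_of_mem hjR] at hj3
    omega
  constructor
  · intro i hi hi1 hiR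
    obtain ⟨j, hj1, hj2, hj3⟩ := key i 1 le_rfl hi hi1
    have : j = i := by omega
    exact hj3 (this ▸ hiR)
  · intro a b ha hab hblock
    rcases Nat.eq_zero_or_pos b with hb | hb
    · subst hb
      simp
    constructor
    · obtain ⟨j, hj1, hj2, hj3⟩ := key a b hb ha hab
      have hsub : (Finset.Ico a (a+b)).filter (fun i => i ∈ R) ⊆
          (Finset.Ico a (a+b)).erase j := by
        intro x hx
        rw [Finset.mem_filter] at hx
        refine Finset.mem_erase.mpr ⟨fun h => hj3 (h ▸ hx.2), hx.1⟩
      calc ((Finset.Ico a (a+b)).filter (fun i => i ∈ R)).card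
          ≤ ((Finset.Ico a (a+b)).erase j).card := Finset.card_le_card hsub
        _ = (Finset.Ico a (a+b)).card - 1 :=
            Finset.card_erase_of_mem (Finset.mem_Ico.mpr ⟨hj1, hj2⟩)
        _ = b - 1 := by rw [Nat.card_Ico]; omega
    · have heq : (Finset.Ico a (a+b)).filter (fun i => i ∈ Q) = Finset.Ico (a+1) (a+b) := by
        ext i
        rw [Finset.mem_filter, Finset.mem_Ico, Finset.mem_Ico]
        constructor
        · rintro ⟨⟨h1, h2⟩, h3⟩
          refine ⟨?_, h2⟩
          rcases Nat.eq_or_lt_of_le h1 with h | h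
          · exact absurd (h ▸ h3) ha
          · omega
        · rintro ⟨h1, h2⟩
          exact ⟨⟨by omega, h2⟩, hblock i (by omega) h2⟩
      rw [heq, Nat.card_Ico]
      omega
end
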